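/- arXiv:math/0702868 — 3 statements merged into one kernel-verified Lean document; each statement's English description precedes it below -/
import Mathlib

section
/- Distribution relation for q-Euler polynomials: let d be an odd positive integer. With E_{n,q}(x) := (1+q)(1-q)^{-n} ∑_{l=0}^{n} (-1)^l C(n,l) q^{x l}/(1 + q^l) (with q^{xl} interpreted via rational exponents when x is rational with denominator dividing d), one has for all n ≥ 0 and natural numbers x: E_{n,q}(x) = [d]_q^n · ([2]_q/[2]_{q^d}) · ∑_{a=0}^{d-1} (-1)^a E_{n,q^d}((x + a)/d). -/
/-- The q-Euler polynomial `E_{n,q}(t)` expressed through the element `qt = q^t`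
(which makes sense of rational arguments `t`):
`E_{n,q}(t) = (1+q)(1-q)^{-n} ∑_{l=0}^{n} (-1)^l C(n,l) (q^t)^l/(1+q^l)`. -/
noncomputable def qEulerPolyAt {K : Type*} [Field K] (q qt : K) (n : ℕ) : K :=
  (1 + q) * ((1 - q)⁻¹) ^ n *
    ∑ l ∈ Finset.range (n + 1), (-1 : K) ^ l * (n.choose l : K) * qt ^ l / (1 + q ^ l)

/-! Summing `(-1)^a (q^{x+a})^l` over `a < d` is an alternating geometric sum with ratio `q^l`;
for odd `d` it equals `q^{xl} (1 + q^{dl}) / (1 + q^l)`. The factor `1 + q^{dl} = 1 + (q^d)^l` cancels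
the denominator of the `l`-th term of `E_{n,q^d}`, which turns the alternating sum of the
`E_{n,q^d}((x+a)/d)` into `E_{n,q}(x)` up to the normalising constants. -/

open Finset

theorem geom_sum_neg_mul_one_add_of_odd {R : Type*} [CommRing R] {d : ℕ} (hd : Odd d) (r : R) :
    (∑ i ∈ range d, (-r) ^ i) * (1 + r) = 1 + r ^ d := by
  simpa [hd.neg_pow] using geom_sum_mul_neg (-r) d

theorem sum_neg_one_pow_mul_mul_pow_pow_of_odd {K : Type*} [Field K] {d : ℕ} (hd : Odd d)
    (q t : K) (l : ℕ) (hl : 1 + q ^ l ≠ 0) :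
    ∑ a ∈ range d, (-1 : K) ^ a * (t * q ^ a) ^ l = t ^ l * (1 + (q ^ d) ^ l) / (1 + q ^ l) := by
  have hgeom := geom_sum_neg_mul_one_add_of_odd hd (q ^ l)
  rw [eq_div_iff hl, ← pow_mul, mul_comm d l, pow_mul, ← hgeom, ← mul_assoc, mul_sum]
  congr 1
  refine sum_congr rfl fun a _ => ?_
  rw [neg_pow (q ^ l), mul_pow, ← pow_mul, ← pow_mul, mul_comm l a]
  ring

theorem qEulerPolyAt_mul_eq_sum_qEulerPolyAt_pow {K : Type*} [Field K] {d : ℕ} (hd : Odd d)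
    (q t : K) (h : ∀ l : ℕ, 1 + q ^ l ≠ 0) (n : ℕ) :
    qEulerPolyAt q t n * ((1 + q ^ d) * ((1 - q ^ d)⁻¹) ^ n) =
      (1 + q) * ((1 - q)⁻¹) ^ n *
        ∑ a ∈ range d, (-1 : K) ^ a * qEulerPolyAt (q ^ d) (t * q ^ a) n := by
  have hterm : ∀ l : ℕ, (-1 : K) ^ l * (n.choose l : K) * t ^ l / (1 + q ^ l) =
      ∑ a ∈ range d, (-1 : K) ^ a *
        ((-1 : K) ^ l * (n.choose l : K) * (t * q ^ a) ^ l / (1 + (q ^ d) ^ l)) := by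
    intro l
    have hdl : 1 + (q ^ d) ^ l ≠ 0 := by rw [← pow_mul]; exact h _
    calc (-1 : K) ^ l * (n.choose l : K) * t ^ l / (1 + q ^ l)
        = (-1 : K) ^ l * (n.choose l : K) / (1 + (q ^ d) ^ l) *
            (t ^ l * (1 + (q ^ d) ^ l) / (1 + q ^ l)) := by field_simp
      _ = _ := by
        rw [← sum_neg_one_pow_mul_mul_pow_pow_of_odd hd q t l (h l), mul_sum]
        exact sum_congr rfl fun a _ => by ring
  unfold qEulerPolyAt
  simp_rw [hterm]
  rw [sum_comm, mul_right_comm, mul_assoc, mul_sum]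
  congr 1
  refine sum_congr rfl fun a _ => ?_
  rw [mul_sum, mul_sum, mul_sum]
  exact sum_congr rfl fun l _ => by ring

theorem qEulerPoly_distribution_general {K : Type*} [Field K]
    (q : K) (d : ℕ) (hd : Odd d)
    (hq : q ≠ 1) (hqd : q ^ d ≠ 1) (h : ∀ l : ℕ, 1 + q ^ l ≠ 0) (n x : ℕ) :
    qEulerPolyAt q (q ^ x) n =
      ((1 - q ^ d) / (1 - q)) ^ n * ((1 + q) / (1 + q ^ d)) *
        ∑ a ∈ Finset.range d, (-1 : K) ^ a * qEulerPolyAt (q ^ d) (q ^ (x + a)) n := by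
  have hq1 : 1 - q ≠ 0 := sub_ne_zero.mpr hq.symm
  have hqd1 : 1 - q ^ d ≠ 0 := sub_ne_zero.mpr hqd.symm
  have hrel := qEulerPolyAt_mul_eq_sum_qEulerPolyAt_pow hd q (q ^ x) h n
  simp only [← pow_add] at hrel
  rw [← eq_div_iff (mul_ne_zero (h d) (pow_ne_zero n (inv_ne_zero hqd1)))] at hrel
  rw [hrel, inv_pow, inv_pow, div_pow]
  field_simp

/-- Distribution relation for q-Euler polynomials: for odd `d > 0`,
`E_{n,q}(x) = [d]_q^n ([2]_q/[2]_{q^d}) ∑_{a=0}^{d-1} (-1)^a E_{n,q^d}((x+a)/d)`,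
where `(q^d)^{(x+a)/d} = q^{x+a}`. -/
theorem qEulerPoly_distribution {K : Type*} [Field K] [CharZero K]
    (q : K) (d : ℕ) (hd : Odd d) (hd0 : 0 < d)
    (hq : q ≠ 1) (hqd : q ^ d ≠ 1) (h : ∀ l : ℕ, 1 + q ^ l ≠ 0) (n x : ℕ) :
    qEulerPolyAt q (q ^ x) n =
      ((1 - q ^ d) / (1 - q)) ^ n * ((1 + q) / (1 + q ^ d)) *
        ∑ a ∈ Finset.range d, (-1 : K) ^ a * qEulerPolyAt (q ^ d) (q ^ (x + a)) n :=
  qEulerPoly_distribution_general q d hd hq hqd h n x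
end

section
/- Removal of the Euler factor at p: with E_{n,χ,q} = lim_{ρ→∞} ((1+q)/2) ∑_{x=1}^{d̄ p^ρ} (-1)^x χ(x) [x]_q^n (limit in ℂ_p, d̄ = lcm(d,p)), one has E_{n,χ,q} - ([2]_q/[2]_{q^p}) χ(p) [p]_q^n E_{n,χ,q^p} = lim_{ρ→∞} ((1+q)/2) ∑*_{1 ≤ x ≤ d̄ p^ρ} (-1)^x χ(x) [x]_q^n, where ∑* denotes the sum over x prime to p. -/
private lemma qfactor_aux {K : Type*} [Field K] (q : K) (p y n : ℕ) :
    ((1 - q ^ (p * y)) / (1 - q)) ^ n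
      = ((1 - (q ^ p) ^ y) / (1 - q ^ p)) ^ n * ((1 - q ^ p) / (1 - q)) ^ n := by
  rw [← mul_pow]
  congr 1
  by_cases h : q ^ p = 1
  · rw [pow_mul, h, one_pow]
    simp
  · rw [pow_mul, div_mul_div_comm, mul_comm (1 - (q ^ p) ^ y),
      mul_div_mul_left _ _ (sub_ne_zero_of_ne (Ne.symm h))]

private lemma sum_pmul_aux {K : Type*} [AddCommMonoid K] (p M : ℕ) (hp : 0 < p) (t : ℕ → K) :
    ∑ x ∈ (Finset.Icc 1 (p * M)).filter (fun x => p ∣ x), t x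
      = ∑ y ∈ Finset.Icc 1 M, t (p * y) := by
  refine Finset.sum_nbij' (fun x => x / p) (fun y => p * y) ?_ ?_ ?_ ?_ ?_
  · intro a ha
    simp only [Finset.mem_filter, Finset.mem_Icc] at ha ⊢
    obtain ⟨⟨h1, h2⟩, k, rfl⟩ := ha
    rw [Nat.mul_div_cancel_left _ hp]
    constructor
    · rcases Nat.eq_zero_or_pos k with rfl | hk
      · omega
      · exact hk
    · exact Nat.le_of_mul_le_mul_left h2 hp
  · intro a ha
    simp only [Finset.mem_filter, Finset.mem_Icc] at ha ⊢
    exact ⟨⟨Nat.mul_pos hp ha.1, Nat.mul_le_mul_left p ha.2⟩, Dvd.intro a rfl⟩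
  · intro a ha
    simp only [Finset.mem_filter] at ha
    exact Nat.mul_div_cancel' ha.2
  · intro a _
    exact Nat.mul_div_cancel_left _ hp
  · intro a ha
    simp only [Finset.mem_filter] at ha
    rw [Nat.mul_div_cancel' ha.2]

/-- Removal of the Euler factor at `p`: if
`E_{n,χ,q} = lim_ρ ((1+q)/2) ∑_{x=1}^{d̄ p^ρ} (-1)^x χ(x) [x]_q^n` and
`E_{n,χ,q^p} = lim_ρ ((1+q^p)/2) ∑_{x=1}^{d̄ p^ρ} (-1)^x χ(x) [x]_{q^p}^n`
(both limits assumed to exist, `d̄ = lcm(d,p)`), then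
`E_{n,χ,q} - ([2]_q/[2]_{q^p}) χ(p) [p]_q^n E_{n,χ,q^p}
  = lim_ρ ((1+q)/2) ∑*_{1 ≤ x ≤ d̄ p^ρ, p ∤ x} (-1)^x χ(x) [x]_q^n`. -/
theorem qEuler_remove_euler_factor {K : Type*} [NontriviallyNormedField K]
    [CompleteSpace K] [CharZero K] [IsUltrametricDist K]
    (p : ℕ) (hp : Nat.Prime p) (hpo : Odd p) (hnp : ‖(p : K)‖ = (p : ℝ)⁻¹)
    (q : K) (hq : ‖q - 1‖ < (p : ℝ) ^ (-1 / ((p : ℝ) - 1)))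
    (d : ℕ) (hd0 : 0 < d) (hdo : Odd d)
    (χ : DirichletCharacter K d) (hcond : χ.conductor = d) (n : ℕ)
    (E Ep : K)
    (hE : Filter.Tendsto
      (fun ρ : ℕ => ((1 + q) / 2) * ∑ x ∈ Finset.Icc 1 (Nat.lcm d p * p ^ ρ),
        (-1 : K) ^ x * χ (x : ZMod d) * ((1 - q ^ x) / (1 - q)) ^ n)
      Filter.atTop (nhds E))
    (hEp : Filter.Tendsto
      (fun ρ : ℕ => ((1 + q ^ p) / 2) * ∑ x ∈ Finset.Icc 1 (Nat.lcm d p * p ^ ρ),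
        (-1 : K) ^ x * χ (x : ZMod d) * ((1 - (q ^ p) ^ x) / (1 - q ^ p)) ^ n)
      Filter.atTop (nhds Ep)) :
    Filter.Tendsto
      (fun ρ : ℕ => ((1 + q) / 2) *
        ∑ x ∈ (Finset.Icc 1 (Nat.lcm d p * p ^ ρ)).filter (fun x => ¬ p ∣ x),
          (-1 : K) ^ x * χ (x : ZMod d) * ((1 - q ^ x) / (1 - q)) ^ n)
      Filter.atTop
      (nhds (E - ((1 + q) / (1 + q ^ p)) * χ (p : ZMod d) *
        ((1 - q ^ p) / (1 - q)) ^ n * Ep)) := by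
  have hp1 : (1 : ℝ) < (p : ℝ) := by exact_mod_cast hp.one_lt
  have hq1 : ‖q - 1‖ < 1 := by
    refine hq.trans_le (le_of_lt (Real.rpow_lt_one_of_one_lt_of_neg hp1 ?_))
    have : (0 : ℝ) < (p : ℝ) - 1 := by linarith
    exact div_neg_of_neg_of_pos (by norm_num) this
  have hqle : ‖q‖ ≤ 1 := by
    have : q = (q - 1) + 1 := by ring
    rw [this]
    refine (IsUltrametricDist.norm_add_le_max _ _).trans ?_
    simp [hq1.le]
  have hqp1 : ‖q ^ p - 1‖ < 1 := by
    have hg := geom_sum_mul q p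
    calc ‖q ^ p - 1‖ = ‖(∑ i ∈ Finset.range p, q ^ i)‖ * ‖q - 1‖ := by
          rw [← hg, norm_mul]
      _ ≤ 1 * ‖q - 1‖ := by
          refine mul_le_mul_of_nonneg_right ?_ (norm_nonneg _)
          refine IsUltrametricDist.norm_sum_le_of_forall_le_of_nonneg zero_le_one ?_
          intro i _
          rw [norm_pow]
          exact pow_le_one₀ (norm_nonneg q) hqle
      _ < 1 := by rw [one_mul]; exact hq1
  have h2 : ‖(2 : K)‖ = 1 := by
    refine le_antisymm (by simpa using IsUltrametricDist.norm_natCast_le_one K 2) ?_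
    by_contra hlt
    push_neg at hlt
    obtain ⟨k, hk⟩ := hpo
    have h1 : (1 : K) = (p : K) - 2 * (k : K) := by
      have : (p : K) = 2 * (k : K) + 1 := by exact_mod_cast congrArg (Nat.cast : ℕ → K) hk
      rw [this]; ring
    have hb : ‖(1 : K)‖ ≤ max ‖(p : K)‖ ‖-(2 * (k : K))‖ := by
      rw [h1, sub_eq_add_neg]
      exact IsUltrametricDist.norm_add_le_max _ _
    rw [norm_one, norm_neg, norm_mul] at hb
    have hpinv : ‖(p : K)‖ < 1 := by rw [hnp]; exact inv_lt_one_of_one_lt₀ hp1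
    have hk1 : ‖(k : K)‖ ≤ 1 := IsUltrametricDist.norm_natCast_le_one K k
    have : ‖(2 : K)‖ * ‖(k : K)‖ < 1 := by
      calc ‖(2 : K)‖ * ‖(k : K)‖ ≤ ‖(2 : K)‖ * 1 :=
            mul_le_mul_of_nonneg_left hk1 (norm_nonneg _)
        _ < 1 := by rw [mul_one]; exact hlt
    rcases le_max_iff.mp hb with h | h
    · linarith
    · linarith
  have h1qp : (1 + q ^ p) ≠ 0 := by
    intro h
    have hqe : q ^ p - 1 = -2 := by linear_combination h
    rw [hqe, norm_neg, h2] at hqp1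
    exact lt_irrefl _ hqp1
  have h20 : (2 : K) ≠ 0 := two_ne_zero
  set D := Nat.lcm d p with hD
  set c : K := ((1 + q) / (1 + q ^ p)) * χ (p : ZMod d) * ((1 - q ^ p) / (1 - q)) ^ n with hc
  have key : ∀ ρ : ℕ,
      ((1 + q) / 2) * ∑ x ∈ (Finset.Icc 1 (D * p ^ (ρ + 1))).filter (fun x => ¬ p ∣ x),
          (-1 : K) ^ x * χ (x : ZMod d) * ((1 - q ^ x) / (1 - q)) ^ n
      = ((1 + q) / 2) * ∑ x ∈ Finset.Icc 1 (D * p ^ (ρ + 1)),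
          (-1 : K) ^ x * χ (x : ZMod d) * ((1 - q ^ x) / (1 - q)) ^ n
        - c * (((1 + q ^ p) / 2) * ∑ x ∈ Finset.Icc 1 (D * p ^ ρ),
          (-1 : K) ^ x * χ (x : ZMod d) * ((1 - (q ^ p) ^ x) / (1 - q ^ p)) ^ n) := by
    intro ρ
    have hsplit := Finset.sum_filter_add_sum_filter_not (Finset.Icc 1 (D * p ^ (ρ + 1)))
      (fun x => p ∣ x)
      (fun x => (-1 : K) ^ x * χ (x : ZMod d) * ((1 - q ^ x) / (1 - q)) ^ n)
    have hre : ∑ x ∈ (Finset.Icc 1 (D * p ^ (ρ + 1))).filter (fun x => p ∣ x),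
          (-1 : K) ^ x * χ (x : ZMod d) * ((1 - q ^ x) / (1 - q)) ^ n
        = (χ (p : ZMod d) * ((1 - q ^ p) / (1 - q)) ^ n) *
          ∑ x ∈ Finset.Icc 1 (D * p ^ ρ),
            (-1 : K) ^ x * χ (x : ZMod d) * ((1 - (q ^ p) ^ x) / (1 - q ^ p)) ^ n := by
      have hre1 : D * p ^ (ρ + 1) = p * (D * p ^ ρ) := by ring
      rw [hre1, sum_pmul_aux p (D * p ^ ρ) hp.pos, Finset.mul_sum]
      refine Finset.sum_congr rfl ?_
      intro y _
      have hsgn : (-1 : K) ^ (p * y) = (-1 : K) ^ y := by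
        rw [pow_mul, hpo.neg_one_pow]
      have hcast : ((p * y : ℕ) : ZMod d) = (p : ZMod d) * (y : ZMod d) := by push_cast; ring
      rw [hsgn, hcast, map_mul, qfactor_aux q p y n]
      ring
    have hsum : ∑ x ∈ (Finset.Icc 1 (D * p ^ (ρ + 1))).filter (fun x => ¬ p ∣ x),
          (-1 : K) ^ x * χ (x : ZMod d) * ((1 - q ^ x) / (1 - q)) ^ n
        = ∑ x ∈ Finset.Icc 1 (D * p ^ (ρ + 1)),
            (-1 : K) ^ x * χ (x : ZMod d) * ((1 - q ^ x) / (1 - q)) ^ n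
          - (χ (p : ZMod d) * ((1 - q ^ p) / (1 - q)) ^ n) *
            ∑ x ∈ Finset.Icc 1 (D * p ^ ρ),
              (-1 : K) ^ x * χ (x : ZMod d) * ((1 - (q ^ p) ^ x) / (1 - q ^ p)) ^ n := by
      rw [← hre, ← hsplit]; ring
    have hconst : (1 + q) / 2 = (1 + q) / (1 + q ^ p) * ((1 + q ^ p) / 2) := by
      rw [div_mul_div_comm, mul_comm (1 + q ^ p) 2, mul_div_mul_right _ _ h1qp]
    rw [hsum, mul_sub, hc]
    congr 1
    rw [hconst]
    ring
  refine (Filter.tendsto_add_atTop_iff_nat 1).mp ?_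
  have hlim := ((Filter.tendsto_add_atTop_iff_nat 1).mpr hE).sub (hEp.const_mul c)
  exact hlim.congr (fun ρ => (key ρ).symm)
end

section
/- p-adic Witt formula for modified q-Euler numbers: let p be an odd prime and q ∈ ℂ_p with |q-1|_p < p^{-1/(p-1)}, 1+q^l ≠ 0 for all l ≥ 0. Then the limit lim_{N→∞} ((1+q)/2) ∑_{x=0}^{p^N - 1} (-1)^x [x]_q^n exists in ℂ_p and equals (1+q)(1-q)^{-n} ∑_{l=0}^{n} (-1)^l C(n,l)/(1+q^l). -/
open Finset Filter IsUltrametricDist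

-- norm of a^l - 1 when ‖a‖ ≤ 1
lemma aux_pow_sub_one_norm_le {K : Type*} [NormedField K] [IsUltrametricDist K]
    {a : K} (ha : ‖a‖ ≤ 1) (l : ℕ) : ‖a ^ l - 1‖ ≤ ‖a - 1‖ := by
  have := geom_sum_mul a l  -- (∑ i in range l, a ^ i) * (a - 1) = a ^ l - 1
  calc ‖a ^ l - 1‖ = ‖(∑ i ∈ Finset.range l, a ^ i) * (a - 1)‖ := by rw [this]
    _ = ‖∑ i ∈ Finset.range l, a ^ i‖ * ‖a - 1‖ := norm_mul _ _
    _ ≤ 1 * ‖a - 1‖ := mul_le_mul_of_nonneg_right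
        (norm_sum_le_of_forall_le_of_nonneg zero_le_one fun i _ => by
          simpa using pow_le_one₀ (norm_nonneg a) ha) (norm_nonneg _)
    _ = ‖a - 1‖ := one_mul _

lemma aux_key {K : Type*} [NontriviallyNormedField K] [IsUltrametricDist K]
    {p : ℕ} (hp : Nat.Prime p) (hnp : ‖(p : K)‖ = (p : ℝ)⁻¹)
    {a : K} (ha : ‖a - 1‖ < (p : ℝ) ^ (-1 / ((p : ℝ) - 1))) :
    ‖a ^ p - 1‖ ≤ ‖a - 1‖ * (p : ℝ)⁻¹ := by
  have hp1 : (1 : ℝ) < p := by exact_mod_cast hp.one_lt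
  have hrpow : ((p : ℝ) ^ (-1 / ((p : ℝ) - 1))) ^ (p - 1) = (p : ℝ)⁻¹ := by
    rw [← Real.rpow_natCast ((p : ℝ) ^ (-1 / ((p : ℝ) - 1))) (p - 1),
      ← Real.rpow_mul (by positivity)]
    have : (-1 / ((p : ℝ) - 1)) * ((p : ℕ) - 1 : ℕ) = -1 := by
      have h1 : ((p - 1 : ℕ) : ℝ) = (p : ℝ) - 1 := by
        have := hp.one_lt
        push_cast [Nat.cast_sub hp.one_lt.le]
        ring
      rw [h1]
      have h2 : (p:ℝ) - 1 ≠ 0 := by linarith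
      field_simp
    rw [this, Real.rpow_neg_one]
  have hr1 : (p : ℝ) ^ (-1 / ((p : ℝ) - 1)) ≤ 1 := by
    apply Real.rpow_le_one_of_one_le_of_nonpos hp1.le
    have : (0:ℝ) < (p:ℝ) - 1 := by linarith
    rw [neg_div]
    simp [le_of_lt, div_pos, this]
  set u := a - 1 with hu
  have hu1 : ‖u‖ ≤ 1 := (ha.trans_le hr1).le
  have key : a ^ p - 1 = ∑ k ∈ Finset.range p, u ^ (k+1) * (p.choose (k+1) : K) := by
    have : a ^ p = (u + 1) ^ p := by rw [hu]; ring_nf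
    rw [this, add_pow]
    simp [Finset.sum_range_succ' (fun k => u ^ k * (p.choose k : K)) p]
  rw [key]
  apply norm_sum_le_of_forall_le_of_nonneg (by positivity)
  intro k hk
  rw [Finset.mem_range] at hk
  rcases eq_or_lt_of_le (Nat.succ_le_of_lt hk) with heq | hlt
  · -- k + 1 = p : term u^p
    rw [show k + 1 = p from heq]
    simp only [Nat.choose_self p, Nat.cast_one, mul_one, norm_pow]
    calc ‖u‖ ^ p = ‖u‖ * ‖u‖ ^ (p - 1) := by
          rw [← pow_succ']
          congr 1
          omega
      _ ≤ ‖u‖ * (p:ℝ)⁻¹ := by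
          gcongr
          rw [← hrpow]
          exact pow_le_pow_left₀ (norm_nonneg _) ha.le _
  · -- 1 ≤ k+1 < p
    have hdvd : p ∣ p.choose (k+1) := hp.dvd_choose_self (Nat.succ_ne_zero k) hlt
    obtain ⟨c, hc⟩ := hdvd
    rw [norm_mul, hc]
    push_cast
    rw [norm_mul, hnp, norm_pow]
    calc ‖u‖ ^ (k+1) * ((p:ℝ)⁻¹ * ‖(c : K)‖)
        ≤ ‖u‖ * ((p:ℝ)⁻¹ * 1) := by
          have h1 : ‖u‖ ^ (k+1) ≤ ‖u‖ :=
            pow_le_of_le_one (norm_nonneg _) hu1 (Nat.succ_ne_zero k)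
          gcongr
          · exact norm_natCast_le_one K c
      _ = ‖u‖ * (p:ℝ)⁻¹ := by ring

lemma aux_tendsto {K : Type*} [NontriviallyNormedField K] [IsUltrametricDist K]
    {p : ℕ} (hp : Nat.Prime p) (hnp : ‖(p : K)‖ = (p : ℝ)⁻¹)
    {q : K} (hq : ‖q - 1‖ < (p : ℝ) ^ (-1 / ((p : ℝ) - 1))) :
    Filter.Tendsto (fun N : ℕ => q ^ (p ^ N)) Filter.atTop (nhds 1) := by
  have hp0 : (0:ℝ) < p := by exact_mod_cast hp.pos
  have hiter : ∀ N : ℕ, ‖q ^ (p ^ N) - 1‖ ≤ ‖q - 1‖ * ((p:ℝ)⁻¹) ^ N ∧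
      ‖q ^ (p ^ N) - 1‖ < (p : ℝ) ^ (-1 / ((p : ℝ) - 1)) := by
    intro N
    induction N with
    | zero => simpa using hq
    | succ N ih =>
      obtain ⟨h1, h2⟩ := ih
      have hstep := aux_key hp hnp h2
      rw [← pow_mul] at hstep
      constructor
      · calc ‖q ^ (p ^ N * p) - 1‖ ≤ ‖q ^ (p ^ N) - 1‖ * (p:ℝ)⁻¹ := hstep
          _ ≤ ‖q - 1‖ * ((p:ℝ)⁻¹) ^ N * (p:ℝ)⁻¹ := by gcongr
          _ = ‖q - 1‖ * ((p:ℝ)⁻¹) ^ (N + 1) := by ring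
      · calc ‖q ^ (p ^ N * p) - 1‖ ≤ ‖q ^ (p ^ N) - 1‖ * (p:ℝ)⁻¹ := hstep
          _ ≤ ‖q ^ (p ^ N) - 1‖ * 1 := by
              gcongr
              rw [inv_le_one_iff₀]; right; exact_mod_cast hp.one_le
          _ < (p : ℝ) ^ (-1 / ((p : ℝ) - 1)) := by rwa [mul_one]
  rw [tendsto_iff_norm_sub_tendsto_zero]
  apply squeeze_zero (fun N => norm_nonneg _) (fun N => (hiter N).1)
  rw [show (0:ℝ) = ‖q - 1‖ * 0 by ring]
  exact (tendsto_pow_atTop_nhds_zero_of_lt_one (by positivity)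
    (by rw [inv_lt_one_iff₀]; right; exact_mod_cast hp.one_lt)).const_mul _

lemma aux_identity {K : Type*} [Field K] [CharZero K]
    (q : K) (h : ∀ l : ℕ, 1 + q ^ l ≠ 0) (n m : ℕ) (hm : Odd m) :
    ((1 + q) / 2) * ∑ x ∈ Finset.range m, (-1 : K) ^ x * ((1 - q ^ x) / (1 - q)) ^ n
    = (1 + q) * ((1 - q)⁻¹) ^ n *
        ∑ k ∈ Finset.range (n + 1),
          ((-1 : K) ^ k * (n.choose k : K) / (1 + q ^ k)) * ((1 + (q ^ m) ^ k) * 2⁻¹) := by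
  have hS : ∑ x ∈ Finset.range m, (-1 : K) ^ x * (1 - q ^ x) ^ n
      = ∑ k ∈ Finset.range (n + 1),
          (-1 : K) ^ k * (n.choose k : K) * ((1 + (q ^ m) ^ k) / (1 + q ^ k)) := by
    have expand : ∀ x, (1 - q ^ x : K) ^ n
        = ∑ k ∈ Finset.range (n + 1), (-1 : K) ^ k * (q ^ k) ^ x * (n.choose k : K) := by
      intro x
      rw [show (1 - q ^ x : K) = -q ^ x + 1 by ring, add_pow]
      refine Finset.sum_congr rfl fun k _ => ?_
      rw [one_pow, mul_one, neg_pow, ← pow_right_comm]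
    calc ∑ x ∈ Finset.range m, (-1 : K) ^ x * (1 - q ^ x) ^ n
        = ∑ x ∈ Finset.range m, ∑ k ∈ Finset.range (n + 1),
            (-1 : K) ^ k * (n.choose k : K) * (-q ^ k) ^ x := by
          refine Finset.sum_congr rfl fun x _ => ?_
          rw [expand, Finset.mul_sum]
          refine Finset.sum_congr rfl fun k _ => ?_
          rw [neg_pow (q ^ k) x]
          ring
      _ = ∑ k ∈ Finset.range (n + 1), (-1 : K) ^ k * (n.choose k : K)
            * ∑ x ∈ Finset.range m, (-q ^ k) ^ x := by
          rw [Finset.sum_comm]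
          exact Finset.sum_congr rfl fun k _ => by rw [Finset.mul_sum]
      _ = _ := by
          refine Finset.sum_congr rfl fun k _ => ?_
          congr 1
          have hne : (-q ^ k : K) ≠ 1 := fun hcon => h k (by rw [← hcon]; ring)
          rw [geom_sum_eq hne, hm.neg_pow]
          rw [show (-(q ^ k) ^ m - 1 : K) = -((q ^ m) ^ k + 1) by
                rw [← pow_right_comm]; ring,
              show (-q ^ k - 1 : K) = -(1 + q ^ k) by ring, neg_div_neg_eq]
          rw [add_comm ((q ^ m) ^ k) 1]
  have step1 : ∑ x ∈ Finset.range m, (-1 : K) ^ x * ((1 - q ^ x) / (1 - q)) ^ n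
      = ((1 - q)⁻¹) ^ n * ∑ x ∈ Finset.range m, (-1 : K) ^ x * (1 - q ^ x) ^ n := by
    rw [Finset.mul_sum]
    exact Finset.sum_congr rfl fun x _ => by rw [div_pow, div_eq_mul_inv, inv_pow]; ring
  rw [step1, hS, Finset.mul_sum, Finset.mul_sum, Finset.mul_sum]
  refine Finset.sum_congr rfl fun k _ => ?_
  have h2 : (2 : K) ≠ 0 := two_ne_zero
  field_simp


/-- p-adic Witt formula for the modified q-Euler numbers: in a complete
ultrametric field modeling `ℂ_p` (odd prime `p`, `‖p‖ = 1/p`), for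
`‖q - 1‖ < p^{-1/(p-1)}` and `1 + q^l ≠ 0` for all `l`,
`lim_{N→∞} ((1+q)/2) ∑_{x=0}^{p^N - 1} (-1)^x [x]_q^n
  = (1+q)(1-q)^{-n} ∑_{l=0}^{n} (-1)^l C(n,l)/(1+q^l)`. -/
theorem padic_witt_formula_qEuler {K : Type*} [NontriviallyNormedField K]
    [CompleteSpace K] [CharZero K] [IsUltrametricDist K]
    (p : ℕ) (hp : Nat.Prime p) (hpo : Odd p) (hnp : ‖(p : K)‖ = (p : ℝ)⁻¹)
    (q : K) (hq : ‖q - 1‖ < (p : ℝ) ^ (-1 / ((p : ℝ) - 1)))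
    (h : ∀ l : ℕ, 1 + q ^ l ≠ 0) (n : ℕ) :
    Filter.Tendsto
      (fun N : ℕ => ((1 + q) / 2) *
        ∑ x ∈ Finset.range (p ^ N), (-1 : K) ^ x * ((1 - q ^ x) / (1 - q)) ^ n)
      Filter.atTop
      (nhds ((1 + q) * ((1 - q)⁻¹) ^ n *
        ∑ l ∈ Finset.range (n + 1), (-1 : K) ^ l * (n.choose l : K) / (1 + q ^ l))) := by
  set r : K → K := fun w => (1 + q) * ((1 - q)⁻¹) ^ n *
      ∑ k ∈ Finset.range (n + 1),
        ((-1 : K) ^ k * (n.choose k : K) / (1 + q ^ k)) * ((1 + w ^ k) * 2⁻¹) with hF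
  have hcont : Continuous r := by
    fun_prop

  have h1 : r 1 = (1 + q) * ((1 - q)⁻¹) ^ n *
      ∑ l ∈ Finset.range (n + 1), (-1 : K) ^ l * (n.choose l : K) / (1 + q ^ l) := by
    simp only [hF, one_pow]
    congr 1
    refine Finset.sum_congr rfl fun k _ => ?_
    rw [show ((1:K) + 1) * 2⁻¹ = 1 by norm_num, mul_one]
  have htd := (hcont.tendsto 1).comp (aux_tendsto hp hnp hq)
  rw [h1] at htd
  exact htd.congr fun N => (aux_identity q h n (p ^ N) (hpo.pow)).symm
end
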